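/- Let α and β be measurable spaces, let μ be a probability measure on α × β, and let ρ₁, ρ₂ be probability measures on α and β respectively. If KL(μ‖ρ₁ ⊗ ρ₂) < ∞, then KL(μ‖ρ₁ ⊗ ρ₂) = KL(μ.fst‖ρ₁) + KL(μ.snd‖ρ₂) + KL(μ‖μ.fst ⊗ μ.snd), where all terms on the right-hand side are finite. -/

import Mathlib

open MeasureTheory
open scoped ENNReal NNReal

open Classical in
/-- The Kullback–Leibler divergence `KL(μ‖ν) ∈ [0,∞]`: it is `∫ log(dμ/dν) dμ` if `μ ≪ ν`
and the log-likelihood ratio is `μ`-integrable, and `+∞` otherwise. -/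
noncomputable def klDiv {X : Type*} [MeasurableSpace X] (μ ν : Measure X) : ℝ≥0∞ :=
  if μ ≪ ν ∧ Integrable (fun x => Real.log ((μ.rnDeriv ν x).toReal)) μ
  then ENNReal.ofReal (∫ x, Real.log ((μ.rnDeriv ν x).toReal) ∂μ)
  else ⊤

/-! The log-likelihood ratio splits `μ`-a.e. as
`llr μ (ρ₁ ⊗ ρ₂) = llr μ (μ₁ ⊗ μ₂) + llr μ₁ ρ₁ ∘ fst + llr μ₂ ρ₂ ∘ snd`,
by the chain rule for Radon–Nikodym derivatives through `μ ≪ μ₁ ⊗ μ₂ ≪ ρ₁ ⊗ ρ₂` and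
`d(μ₁ ⊗ μ₂)/d(ρ₁ ⊗ ρ₂) = dμ₁/dρ₁ ⊗ dμ₂/dρ₂`. The data processing inequality makes the two
marginal terms integrable, hence also the third, and integrating the splitting gives the identity;
by Gibbs' inequality all three integrals are nonnegative, so it survives `ENNReal.ofReal`. -/

section KLDivergence

variable {X : Type*} [MeasurableSpace X] {μ ν : Measure X}

lemma klDiv_ne_top_iff : klDiv μ ν ≠ ⊤ ↔ μ ≪ ν ∧ Integrable (llr μ ν) μ := by
  classical
  rw [klDiv]
  split_ifs with h
  · exact iff_of_true ENNReal.ofReal_ne_top h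
  · exact iff_of_false (not_not.mpr rfl) h

lemma klDiv_eq_ofReal_integral_llr (hμν : μ ≪ ν) (hint : Integrable (llr μ ν) μ) :
    klDiv μ ν = ENNReal.ofReal (∫ x, llr μ ν x ∂μ) := by
  rw [klDiv, if_pos ⟨hμν, hint⟩, llr_def]

end KLDivergence

namespace MeasureTheory

section LogLikelihoodRatio

variable {X : Type*} [MeasurableSpace X] {μ ν π : Measure X}

lemma integral_llr_nonneg [IsProbabilityMeasure μ] [IsProbabilityMeasure ν] (hμν : μ ≪ ν)
    (hint : Integrable (llr μ ν) μ) : 0 ≤ ∫ x, llr μ ν x ∂μ := by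
  simpa using InformationTheory.integral_llr_add_sub_measure_univ_nonneg hμν hint

lemma llr_ae_eq_llr_add_llr [SigmaFinite μ] [SigmaFinite ν] [SigmaFinite π]
    (hμπ : μ ≪ π) (hπν : π ≪ ν) : llr μ ν =ᵐ[μ] llr μ π + llr π ν := by
  have hμν := hμπ.trans hπν
  filter_upwards [hμν.ae_le (Measure.rnDeriv_mul_rnDeriv hμπ), Measure.rnDeriv_pos hμπ,
    hμπ.ae_le (Measure.rnDeriv_lt_top μ π), hμπ.ae_le (Measure.rnDeriv_pos hπν),
    hμν.ae_le (Measure.rnDeriv_lt_top π ν)] with x hmul hμπ_pos hμπ_lt hπν_pos hπν_lt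
  simp only [llr_def, Pi.add_apply, ← hmul, Pi.mul_apply, ENNReal.toReal_mul]
  exact Real.log_mul (ENNReal.toReal_pos hμπ_pos.ne' hμπ_lt.ne).ne'
    (ENNReal.toReal_pos hπν_pos.ne' hπν_lt.ne).ne'

lemma Measure.AbsolutelyContinuous.withDensity_of_ae_ne_zero {f : X → ℝ≥0∞} (hμν : μ ≪ ν)
    (hf : AEMeasurable f ν) (hf_ne_zero : ∀ᵐ x ∂μ, f x ≠ 0) : μ ≪ ν.withDensity f := by
  refine Measure.AbsolutelyContinuous.mk fun s _ hs => ?_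
  have hpos : μ ({x | f x ≠ 0} ∩ s) = 0 := hμν ((withDensity_apply_eq_zero' hf).mp hs)
  have hzero : μ {x | f x = 0} = 0 := by simpa only [ae_iff, not_not] using hf_ne_zero
  refine measure_mono_null (fun x hx => ?_) (measure_union_null hpos hzero)
  by_cases hfx : f x = 0
  · exact Or.inr hfx
  · exact Or.inl ⟨hfx, hx⟩

end LogLikelihoodRatio

section Product

variable {α β : Type*} [MeasurableSpace α] [MeasurableSpace β]
  {μ₁ ρ₁ : Measure α} {μ₂ ρ₂ : Measure β} {μ : Measure (α × β)}

lemma Measure.AbsolutelyContinuous.fst [SFinite ρ₂] (h : μ ≪ ρ₁.prod ρ₂) : μ.fst ≪ ρ₁ := by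
  have := h.map measurable_fst
  rw [Measure.map_fst_prod] at this
  exact this.trans Measure.smul_absolutelyContinuous

lemma Measure.AbsolutelyContinuous.snd [SFinite ρ₂] (h : μ ≪ ρ₁.prod ρ₂) : μ.snd ≪ ρ₂ := by
  have := h.map measurable_snd
  rw [Measure.map_snd_prod] at this
  exact this.trans Measure.smul_absolutelyContinuous

lemma Measure.prod_eq_withDensity_rnDeriv [SigmaFinite μ₁] [SigmaFinite μ₂] [SigmaFinite ρ₁]
    [SigmaFinite ρ₂] (h₁ : μ₁ ≪ ρ₁) (h₂ : μ₂ ≪ ρ₂) :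
    μ₁.prod μ₂ = (ρ₁.prod ρ₂).withDensity fun z => μ₁.rnDeriv ρ₁ z.1 * μ₂.rnDeriv ρ₂ z.2 := by
  rw [← prod_withDensity (Measure.measurable_rnDeriv _ _) (Measure.measurable_rnDeriv _ _),
    Measure.withDensity_rnDeriv_eq _ _ h₁, Measure.withDensity_rnDeriv_eq _ _ h₂]

lemma llr_prod [SigmaFinite μ₁] [SigmaFinite μ₂] [SigmaFinite ρ₁] [SigmaFinite ρ₂]
    (h₁ : μ₁ ≪ ρ₁) (h₂ : μ₂ ≪ ρ₂) :
    llr (μ₁.prod μ₂) (ρ₁.prod ρ₂) =ᵐ[μ₁.prod μ₂] fun z => llr μ₁ ρ₁ z.1 + llr μ₂ ρ₂ z.2 := by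
  have hrn : (μ₁.prod μ₂).rnDeriv (ρ₁.prod ρ₂)
      =ᵐ[ρ₁.prod ρ₂] fun z => μ₁.rnDeriv ρ₁ z.1 * μ₂.rnDeriv ρ₂ z.2 := by
    rw [Measure.prod_eq_withDensity_rnDeriv h₁ h₂]
    exact Measure.rnDeriv_withDensity _ (by fun_prop)
  filter_upwards [(h₁.prod h₂).ae_le hrn,
    Measure.quasiMeasurePreserving_fst.ae (Measure.rnDeriv_pos h₁),
    Measure.quasiMeasurePreserving_fst.ae (h₁.ae_le (Measure.rnDeriv_lt_top μ₁ ρ₁)),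
    Measure.quasiMeasurePreserving_snd.ae (Measure.rnDeriv_pos h₂),
    Measure.quasiMeasurePreserving_snd.ae (h₂.ae_le (Measure.rnDeriv_lt_top μ₂ ρ₂))]
    with z hz h₁_pos h₁_lt h₂_pos h₂_lt
  simp only [llr_def, hz, ENNReal.toReal_mul]
  exact Real.log_mul (ENNReal.toReal_pos h₁_pos.ne' h₁_lt.ne).ne'
    (ENNReal.toReal_pos h₂_pos.ne' h₂_lt.ne).ne'

variable [IsFiniteMeasure μ] [SigmaFinite ρ₁] [SigmaFinite ρ₂]

lemma Measure.AbsolutelyContinuous.fst_prod_snd (h : μ ≪ ρ₁.prod ρ₂) :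
    μ ≪ μ.fst.prod μ.snd := by
  rw [Measure.prod_eq_withDensity_rnDeriv h.fst h.snd]
  refine h.withDensity_of_ae_ne_zero (by fun_prop) ?_
  filter_upwards [ae_of_ae_map measurable_fst.aemeasurable (Measure.rnDeriv_pos h.fst),
    ae_of_ae_map measurable_snd.aemeasurable (Measure.rnDeriv_pos h.snd)] with z h₁ h₂
  exact mul_ne_zero h₁.ne' h₂.ne'

lemma llr_ae_eq_llr_fst_prod_snd_add (h : μ ≪ ρ₁.prod ρ₂) :
    llr μ (ρ₁.prod ρ₂) =ᵐ[μ]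
      fun z => llr μ (μ.fst.prod μ.snd) z + (llr μ.fst ρ₁ z.1 + llr μ.snd ρ₂ z.2) := by
  have hπ := h.fst_prod_snd
  filter_upwards [llr_ae_eq_llr_add_llr hπ (h.fst.prod h.snd), hπ.ae_le (llr_prod h.fst h.snd)]
    with z hz hz'
  rw [hz, Pi.add_apply, hz']

end Product

section ProbabilityProduct

variable {α β : Type*} [MeasurableSpace α] [MeasurableSpace β] {μ : Measure (α × β)}
  [IsProbabilityMeasure μ] {ρ₁ : Measure α} {ρ₂ : Measure β}
  [IsProbabilityMeasure ρ₁] [IsProbabilityMeasure ρ₂]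

lemma integrable_llr_fst (h : μ ≪ ρ₁.prod ρ₂) (hint : Integrable (llr μ (ρ₁.prod ρ₂)) μ) :
    Integrable (llr μ.fst ρ₁) μ.fst := by
  have := InformationTheory.integrable_llr_map h measurable_fst hint
  rwa [Measure.map_fst_prod, measure_univ, one_smul] at this

lemma integrable_llr_snd (h : μ ≪ ρ₁.prod ρ₂) (hint : Integrable (llr μ (ρ₁.prod ρ₂)) μ) :
    Integrable (llr μ.snd ρ₂) μ.snd := by
  have := InformationTheory.integrable_llr_map h measurable_snd hint
  rwa [Measure.map_snd_prod, measure_univ, one_smul] at this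

lemma integrable_llr_fst_add_llr_snd (h : μ ≪ ρ₁.prod ρ₂)
    (hint : Integrable (llr μ (ρ₁.prod ρ₂)) μ) :
    Integrable (fun z => llr μ.fst ρ₁ z.1 + llr μ.snd ρ₂ z.2) μ :=
  ((integrable_llr_fst h hint).comp_measurable measurable_fst).add
    ((integrable_llr_snd h hint).comp_measurable measurable_snd)

lemma integrable_llr_fst_prod_snd (h : μ ≪ ρ₁.prod ρ₂)
    (hint : Integrable (llr μ (ρ₁.prod ρ₂)) μ) :
    Integrable (llr μ (μ.fst.prod μ.snd)) μ := by
  refine (hint.sub (integrable_llr_fst_add_llr_snd h hint)).congr ?_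
  filter_upwards [llr_ae_eq_llr_fst_prod_snd_add h] with z hz
  rw [Pi.sub_apply, hz, add_sub_cancel_right]

lemma integral_llr_prod_eq_add (h : μ ≪ ρ₁.prod ρ₂) (hint : Integrable (llr μ (ρ₁.prod ρ₂)) μ) :
    ∫ z, llr μ (ρ₁.prod ρ₂) z ∂μ = ∫ x, llr μ.fst ρ₁ x ∂μ.fst + ∫ y, llr μ.snd ρ₂ y ∂μ.snd
      + ∫ z, llr μ (μ.fst.prod μ.snd) z ∂μ := by
  have hfst : Integrable (fun z => llr μ.fst ρ₁ z.1) μ :=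
    (integrable_llr_fst h hint).comp_measurable measurable_fst
  have hsnd : Integrable (fun z => llr μ.snd ρ₂ z.2) μ :=
    (integrable_llr_snd h hint).comp_measurable measurable_snd
  rw [integral_congr_ae (llr_ae_eq_llr_fst_prod_snd_add h),
    integral_add (integrable_llr_fst_prod_snd h hint) (integrable_llr_fst_add_llr_snd h hint),
    integral_add hfst hsnd,
    Measure.fst, Measure.snd,
    integral_map measurable_fst.aemeasurable (stronglyMeasurable_llr _ _).aestronglyMeasurable,
    integral_map measurable_snd.aemeasurable (stronglyMeasurable_llr _ _).aestronglyMeasurable]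
  ring

end ProbabilityProduct

end MeasureTheory

theorem KL_tensorization
    {α β : Type*} [MeasurableSpace α] [MeasurableSpace β]
    (μ : Measure (α × β)) [IsProbabilityMeasure μ]
    (ρ₁ : Measure α) (ρ₂ : Measure β)
    [IsProbabilityMeasure ρ₁] [IsProbabilityMeasure ρ₂]
    (hfin : klDiv μ (ρ₁.prod ρ₂) < ⊤) :
    klDiv μ (ρ₁.prod ρ₂)
        = klDiv μ.fst ρ₁ + klDiv μ.snd ρ₂ + klDiv μ (μ.fst.prod μ.snd)
      ∧ klDiv μ.fst ρ₁ ≠ ⊤ ∧ klDiv μ.snd ρ₂ ≠ ⊤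
      ∧ klDiv μ (μ.fst.prod μ.snd) ≠ ⊤ := by
  obtain ⟨hac, hint⟩ := klDiv_ne_top_iff.mp hfin.ne
  have h₁ := hac.fst
  have h₂ := hac.snd
  have hπ := hac.fst_prod_snd
  have hint₁ := integrable_llr_fst hac hint
  have hint₂ := integrable_llr_snd hac hint
  have hintπ := integrable_llr_fst_prod_snd hac hint
  have hnn₁ := integral_llr_nonneg h₁ hint₁
  have hnn₂ := integral_llr_nonneg h₂ hint₂
  have hnnπ := integral_llr_nonneg hπ hintπ
  refine ⟨?_, klDiv_ne_top_iff.mpr ⟨h₁, hint₁⟩, klDiv_ne_top_iff.mpr ⟨h₂, hint₂⟩,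
    klDiv_ne_top_iff.mpr ⟨hπ, hintπ⟩⟩
  rw [klDiv_eq_ofReal_integral_llr hac hint, klDiv_eq_ofReal_integral_llr h₁ hint₁,
    klDiv_eq_ofReal_integral_llr h₂ hint₂, klDiv_eq_ofReal_integral_llr hπ hintπ,
    integral_llr_prod_eq_add hac hint, ENNReal.ofReal_add (add_nonneg hnn₁ hnn₂) hnnπ,
    ENNReal.ofReal_add hnn₁ hnn₂]
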